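/- (Correctness of Group-Hier-Prox.) Let v ∈ ℝ^k with v ≠ 0, u ∈ ℝ^K, λ ≥ 0, M > 0. Sort the entries of u so that |u_(1)| ≥ ... ≥ |u_(K)|, with conventions |u_(0)| = +∞ and |u_(K+1)| = 0. For m ∈ {0,1,...,K} define w_m = (M/(1+mM²)) · S_λ( ‖v‖₂ + M·Σ_{i=1}^m |u_(i)| ). Let m̃ be the smallest m ∈ {0,...,K} such that |u_(m+1)| ≤ w_m ≤ |u_(m)|. Then the pair (b̃, W̃) with b̃ = (1/M)·w_{m̃}·(v/‖v‖₂) and W̃_j = sign(u_j)·min{ w_{m̃}, |u_j| } for each j is a global minimizer of: minimize ½‖v − b‖₂² + ½‖u − W‖₂² + λ‖b‖₂ over (b, W) ∈ ℝ^k × ℝ^K subject to ‖W‖_∞ ≤ M‖b‖₂. -/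

import Mathlib

/-!
For fixed `β = ‖b‖₂` the objective is smallest when `b` is parallel to `v` and `W` is `u` clipped
at `Mβ`; this reduces the problem to minimising the convex function `objRadial` of `β ≥ 0`
(with `r = ‖v‖₂`, `a = |u|`). The sorting condition on `m̃` gives
`∑ⱼ (|u_j| − w)⁺ = ∑_{i ≤ m̃} |u_(i)| − m̃ w`, so the formula for `w_{m̃}` says exactly that
`β̃ = w_{m̃} / M` solves `β̃ = (‖v‖₂ − λ + M ∑ⱼ (|u_j| − Mβ̃)⁺)⁺`, which is the first-order
optimality condition for `objRadial` at `β̃`.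
-/

/-- Soft-thresholding operator `S_t(x) = sign(x) · max(|x| − t, 0)`. -/
noncomputable def st (t x : ℝ) : ℝ := Real.sign x * max (|x| - t) 0

/-- Euclidean (ℓ₂) norm on `ℝ^n`. -/
noncomputable def l2 {n : ℕ} (x : Fin n → ℝ) : ℝ := Real.sqrt (∑ i, (x i) ^ 2)

/-- `du u σ m = |u_(m)|`, the `m`-th largest absolute entry of `u` (1-based, via a sorting
permutation `σ`), with the out-of-range convention `|u_(m)| = 0` for `m > K`
(implementing `|u_(K+1)| = 0`). -/
noncomputable def du {K : ℕ} (u : Fin K → ℝ) (σ : Equiv.Perm (Fin K)) (m : ℕ) : ℝ :=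
  if h : m - 1 < K then |u (σ ⟨m - 1, h⟩)| else 0

/-- `w_m = (M/(1+mM²)) · S_λ( ‖v‖₂ + M·Σ_{i=1}^m |u_(i)| )`. -/
noncomputable def wmg {k K : ℕ} (u : Fin K → ℝ) (σ : Equiv.Perm (Fin K))
    (lam M : ℝ) (v : Fin k → ℝ) (m : ℕ) : ℝ :=
  (M / (1 + (m : ℝ) * M ^ 2)) * st lam (l2 v + M * ∑ i ∈ Finset.Icc 1 m, du u σ i)

/-- Objective of the group Hier-Prox problem: `½‖v − b‖₂² + ½‖u − W‖₂² + λ‖b‖₂`. -/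
noncomputable def objG {k K : ℕ} (lam : ℝ) (v : Fin k → ℝ) (u : Fin K → ℝ)
    (b : Fin k → ℝ) (W : Fin K → ℝ) : ℝ :=
  (1 / 2) * ∑ i, (v i - b i) ^ 2 + (1 / 2) * ∑ j, (u j - W j) ^ 2 + lam * l2 b

section l2

variable {n : ℕ}

lemma l2_eq_norm (x : Fin n → ℝ) : l2 x = ‖(WithLp.toLp 2 x : EuclideanSpace ℝ (Fin n))‖ := by
  simp [l2, EuclideanSpace.norm_eq]

lemma l2_nonneg (x : Fin n → ℝ) : 0 ≤ l2 x := Real.sqrt_nonneg _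

lemma l2_sq (x : Fin n → ℝ) : l2 x ^ 2 = ∑ i, x i ^ 2 :=
  Real.sq_sqrt (Finset.sum_nonneg fun _ _ => sq_nonneg _)

lemma l2_pos {x : Fin n → ℝ} (hx : x ≠ 0) : 0 < l2 x := by
  rw [l2_eq_norm, norm_pos_iff]
  exact fun h => hx (by simpa using congrArg WithLp.ofLp h)

lemma l2_const_mul (c : ℝ) (x : Fin n → ℝ) : l2 (fun i => c * x i) = |c| * l2 x := by
  rw [l2_eq_norm, l2_eq_norm, ← Real.norm_eq_abs, ← norm_smul]
  rfl

lemma sq_l2_sub_l2_le (x y : Fin n → ℝ) : (l2 x - l2 y) ^ 2 ≤ ∑ i, (x i - y i) ^ 2 := by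
  have h := abs_norm_sub_norm_le (WithLp.toLp 2 x : EuclideanSpace ℝ (Fin n)) (WithLp.toLp 2 y)
  rw [← l2_eq_norm, ← l2_eq_norm, ← WithLp.toLp_sub, ← l2_eq_norm] at h
  rw [← sq_abs]
  exact (pow_le_pow_left₀ (abs_nonneg _) h 2).trans_eq (l2_sq _)

end l2

lemma abs_sign_mul_min_abs_le {w : ℝ} (hw : 0 ≤ w) (y : ℝ) : |Real.sign y * min w (abs y)| ≤ w := by
  rw [abs_mul, abs_of_nonneg (le_min hw (abs_nonneg y))]
  rcases Real.sign_apply_eq y with h | h | h <;> simp [h, hw]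

lemma sub_sign_mul_min_abs_sq {w : ℝ} (hw : 0 ≤ w) (y : ℝ) :
    (y - Real.sign y * min w |y|) ^ 2 = max (|y| - w) 0 ^ 2 := by
  rcases lt_trichotomy y 0 with hy | rfl | hy
  · rw [Real.sign_of_neg hy, abs_of_neg hy]
    rcases le_total w (-y) with h | h
    · rw [min_eq_left h, max_eq_left (by linarith)]; ring
    · rw [min_eq_right h, max_eq_right (by linarith)]; ring
  · simp [hw]
  · rw [Real.sign_of_pos hy, abs_of_pos hy]
    rcases le_total w y with h | h
    · rw [min_eq_left h, max_eq_left (by linarith)]; ring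
    · rw [min_eq_right h, max_eq_right (by linarith)]; ring

lemma sq_max_abs_sub_le_sq_sub {y z c : ℝ} (hz : |z| ≤ c) : max (|y| - c) 0 ^ 2 ≤ (y - z) ^ 2 := by
  rw [← sq_abs (y - z)]
  refine pow_le_pow_left₀ (le_max_right _ _) (max_le ?_ (abs_nonneg _)) 2
  linarith [abs_sub_abs_le_abs_sub y z]

lemma half_sq_max_zero_add_le (a a₀ : ℝ) :
    1 / 2 * max a₀ 0 ^ 2 + max a₀ 0 * (a - a₀) ≤ 1 / 2 * max a 0 ^ 2 := by
  rcases le_total a₀ 0 with h | h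
  · rw [max_eq_right h]
    nlinarith [sq_nonneg (max a 0)]
  · rw [max_eq_left h]
    nlinarith [le_max_left a 0, le_max_right a 0, sq_nonneg (max a 0 - a₀)]

noncomputable def objRadial {ι : Type*} [Fintype ι] (lam M r : ℝ) (a : ι → ℝ) (β : ℝ) : ℝ :=
  1 / 2 * (r - β) ^ 2 + 1 / 2 * ∑ j, max (a j - M * β) 0 ^ 2 + lam * β

section objRadial

variable {ι : Type*} [Fintype ι] (lam M r : ℝ) (a : ι → ℝ)

lemma objRadial_add_mul_sub_le (β₀ β : ℝ) :
    objRadial lam M r a β₀ + (β₀ - r + lam - M * ∑ j, max (a j - M * β₀) 0) * (β - β₀)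
      ≤ objRadial lam M r a β := by
  have tangent := Finset.sum_le_sum fun j (_ : j ∈ Finset.univ) =>
    half_sq_max_zero_add_le (a j - M * β) (a j - M * β₀)
  rw [Finset.sum_add_distrib, ← Finset.mul_sum, ← Finset.mul_sum] at tangent
  have linear : ∑ j, max (a j - M * β₀) 0 * (a j - M * β - (a j - M * β₀))
      = -(M * ∑ j, max (a j - M * β₀) 0) * (β - β₀) := by
    rw [neg_mul, Finset.mul_sum, Finset.sum_mul, ← Finset.sum_neg_distrib]
    exact Finset.sum_congr rfl fun j _ => by ring
  unfold objRadial
  nlinarith [sq_nonneg (β - β₀)]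

lemma objRadial_le_of_eq_max {β₀ : ℝ}
    (hβ₀ : β₀ = max (r - lam + M * ∑ j, max (a j - M * β₀) 0) 0) {β : ℝ} (hβ : 0 ≤ β) :
    objRadial lam M r a β₀ ≤ objRadial lam M r a β := by
  refine le_trans (le_add_of_nonneg_right ?_) (objRadial_add_mul_sub_le lam M r a β₀ β)
  rcases le_total (r - lam + M * ∑ j, max (a j - M * β₀) 0) 0 with h | h
  · rw [max_eq_right h] at hβ₀
    subst hβ₀
    nlinarith
  · rw [max_eq_left h] at hβ₀
    nlinarith

end objRadial

section objG

variable {k K : ℕ} (lam M : ℝ) (v : Fin k → ℝ) (u : Fin K → ℝ)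

lemma objRadial_le_objG {b : Fin k → ℝ} {W : Fin K → ℝ} (hW : ∀ j, |W j| ≤ M * l2 b) :
    objRadial lam M (l2 v) (fun j => |u j|) (l2 b) ≤ objG lam v u b W := by
  have hv := sq_l2_sub_l2_le v b
  have hu := Finset.sum_le_sum fun j (_ : j ∈ Finset.univ) =>
    sq_max_abs_sub_le_sq_sub (y := u j) (hW j)
  unfold objRadial objG
  linarith

lemma l2_candidate (hM : 0 < M) (hv : 0 < l2 v) {w : ℝ} (hw : 0 ≤ w) :
    l2 (fun i => 1 / M * w * (v i / l2 v)) = w / M := by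
  have h := l2_const_mul (w / (M * l2 v)) v
  rw [abs_of_nonneg (by positivity)] at h
  convert h using 2 <;> field_simp

lemma objG_candidate (hM : 0 < M) (hv : 0 < l2 v) {w : ℝ} (hw : 0 ≤ w) :
    objG lam v u (fun i => 1 / M * w * (v i / l2 v)) (fun j => Real.sign (u j) * min w (abs (u j)))
      = objRadial lam M (l2 v) (fun j => |u j|) (w / M) := by
  have hb : ∑ i, (v i - 1 / M * w * (v i / l2 v)) ^ 2 = (l2 v - w / M) ^ 2 := by
    calc ∑ i, (v i - 1 / M * w * (v i / l2 v)) ^ 2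
        = ∑ i, (1 - w / (M * l2 v)) ^ 2 * v i ^ 2 :=
          Finset.sum_congr rfl fun i _ => by field_simp
      _ = (1 - w / (M * l2 v)) ^ 2 * l2 v ^ 2 := by rw [← Finset.mul_sum, l2_sq]
      _ = (l2 v - w / M) ^ 2 := by field_simp
  unfold objG objRadial
  rw [l2_candidate M v hM hv hw, hb, mul_div_cancel₀ w hM.ne']
  simp only [sub_sign_mul_min_abs_sq hw]

end objG

section sorted

variable {K : ℕ} (u : Fin K → ℝ) (σ : Equiv.Perm (Fin K))

lemma du_nonneg (m : ℕ) : 0 ≤ du u σ m := by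
  unfold du
  split
  · exact abs_nonneg _
  · exact le_rfl

lemma du_succ (i : Fin K) : du u σ (i + 1) = |u (σ i)| := by
  simp [du]

variable {u σ}

lemma du_le_du_of_le (hsort : ∀ i j : Fin K, i ≤ j → |u (σ j)| ≤ |u (σ i)|) {i j : ℕ}
    (hi : 1 ≤ i) (hij : i ≤ j) : du u σ j ≤ du u σ i := by
  unfold du
  split_ifs with hj hi'
  · exact hsort ⟨i - 1, hi'⟩ ⟨j - 1, hj⟩ (Fin.mk_le_mk.2 (by omega))
  · omega
  · exact abs_nonneg _
  · exact le_rfl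

lemma sum_Icc_one_eq_sum_range {M : Type*} [AddCommMonoid M] (f : ℕ → M) (m : ℕ) :
    ∑ i ∈ Finset.Icc 1 m, f i = ∑ i ∈ Finset.range m, f (i + 1) := by
  induction m with
  | zero => simp
  | succ m ih => rw [Finset.sum_Icc_succ_top (by omega), ih, Finset.sum_range_succ]

lemma sum_max_abs_sub_eq (hsort : ∀ i j : Fin K, i ≤ j → |u (σ j)| ≤ |u (σ i)|)
    {m : ℕ} (hm : m ≤ K) {w : ℝ} (hlow : du u σ (m + 1) ≤ w) (hup : 0 < m → w ≤ du u σ m) :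
    ∑ j, max (|u j| - w) 0 = ∑ i ∈ Finset.Icc 1 m, du u σ i - m * w := by
  have head : ∀ i ∈ Finset.range m, max (du u σ (i + 1) - w) 0 = du u σ (i + 1) - w := by
    intro i hi
    have hi := Finset.mem_range.1 hi
    have hle : du u σ m ≤ du u σ (i + 1) := du_le_du_of_le hsort (by omega) (by omega)
    exact max_eq_left (by linarith [hup (by omega)])
  have tail : ∀ i ∈ Finset.Ico m K, max (du u σ (i + 1) - w) 0 = 0 := by
    intro i hi
    have hi := Finset.mem_Ico.1 hi
    have hle : du u σ (i + 1) ≤ du u σ (m + 1) := du_le_du_of_le hsort (by omega) (by omega)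
    exact max_eq_right (by linarith)
  calc ∑ j, max (|u j| - w) 0
      = ∑ j : Fin K, max (du u σ (j + 1) - w) 0 := by
        rw [← Equiv.sum_comp σ]
        simp only [du_succ]
    _ = ∑ i ∈ Finset.range K, max (du u σ (i + 1) - w) 0 :=
        Fin.sum_univ_eq_sum_range (fun i => max (du u σ (i + 1) - w) 0) K
    _ = ∑ i ∈ Finset.range m, (du u σ (i + 1) - w) := by
        rw [← Finset.sum_range_add_sum_Ico _ hm, Finset.sum_congr rfl head,
          Finset.sum_congr rfl tail, Finset.sum_const_zero, add_zero]
    _ = ∑ i ∈ Finset.Icc 1 m, du u σ i - m * w := by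
        rw [Finset.sum_sub_distrib, sum_Icc_one_eq_sum_range, Finset.sum_const,
          Finset.card_range, nsmul_eq_mul]

end sorted

lemma st_of_pos (t : ℝ) {x : ℝ} (hx : 0 < x) : st t x = max (x - t) 0 := by
  rw [st, Real.sign_of_pos hx, abs_of_pos hx, one_mul]

lemma div_eq_max_of_eq_mul_max {M m c w : ℝ} (hM : 0 < M) (hm : 0 ≤ m)
    (hw : w = M / (1 + m * M ^ 2) * max c 0) : w / M = max (c - M * m * w) 0 := by
  have hden : 0 < 1 + m * M ^ 2 := by positivity
  rcases le_total c 0 with hc | hc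
  · rw [hw, max_eq_right hc, mul_zero, zero_div, mul_zero, sub_zero, max_eq_right hc]
  · rw [max_eq_left hc] at hw
    have hwM : w / M = c / (1 + m * M ^ 2) := by rw [hw]; field_simp
    have hres : c - M * m * w = c / (1 + m * M ^ 2) := by rw [hw]; field_simp; ring
    rw [hwM, hres, max_eq_left (by positivity)]

section wmg

variable {k K : ℕ} {u : Fin K → ℝ} {σ : Equiv.Perm (Fin K)} {lam M : ℝ} {v : Fin k → ℝ}

lemma wmg_eq (hv : 0 < l2 v) (hM : 0 < M) (m : ℕ) :
    wmg u σ lam M v m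
      = M / (1 + m * M ^ 2) * max (l2 v + M * ∑ i ∈ Finset.Icc 1 m, du u σ i - lam) 0 := by
  have hS : 0 ≤ ∑ i ∈ Finset.Icc 1 m, du u σ i := Finset.sum_nonneg fun i _ => du_nonneg u σ i
  rw [wmg, st_of_pos _ (by positivity)]

lemma wmg_nonneg (hv : 0 < l2 v) (hM : 0 < M) (m : ℕ) : 0 ≤ wmg u σ lam M v m := by
  rw [wmg_eq hv hM]
  positivity

lemma wmg_div_eq_max (hv : 0 < l2 v) (hM : 0 < M) (m : ℕ) :
    wmg u σ lam M v m / M = max (l2 v - lam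
      + M * (∑ i ∈ Finset.Icc 1 m, du u σ i - m * wmg u σ lam M v m)) 0 := by
  rw [div_eq_max_of_eq_mul_max hM m.cast_nonneg (wmg_eq hv hM m)]
  congr 1
  ring

end wmg

theorem stmt3_general (k K : ℕ)
    (lam M : ℝ) (hM : 0 < M)
    (v : Fin k → ℝ) (hv : v ≠ 0) (u : Fin K → ℝ)
    (σ : Equiv.Perm (Fin K))
    (hsort : ∀ i j : Fin K, i ≤ j → |u (σ j)| ≤ |u (σ i)|)
    (mt : ℕ) (hmt : mt ≤ K)
    (hcond : du u σ (mt + 1) ≤ wmg u σ lam M v mt ∧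
      (0 < mt → wmg u σ lam M v mt ≤ du u σ mt)) :
    (∀ j, |Real.sign (u j) * min (wmg u σ lam M v mt) (abs (u j))|
        ≤ M * l2 (fun i => (1 / M) * wmg u σ lam M v mt * (v i / l2 v))) ∧
    ∀ (b : Fin k → ℝ) (W : Fin K → ℝ), (∀ j, |W j| ≤ M * l2 b) →
      objG lam v u (fun i => (1 / M) * wmg u σ lam M v mt * (v i / l2 v))
          (fun j => Real.sign (u j) * min (wmg u σ lam M v mt) (abs (u j)))
        ≤ objG lam v u b W := by
  have hnv : 0 < l2 v := l2_pos hv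
  set w := wmg u σ lam M v mt
  have hw : 0 ≤ w := wmg_nonneg hnv hM mt
  refine ⟨fun j => ?_, fun b W hW => ?_⟩
  · rw [l2_candidate M v hM hnv hw, mul_div_cancel₀ _ hM.ne']
    exact abs_sign_mul_min_abs_le hw (u j)
  · have hfix : w / M = max (l2 v - lam + M * ∑ j, max (|u j| - M * (w / M)) 0) 0 := by
      rw [mul_div_cancel₀ _ hM.ne', sum_max_abs_sub_eq hsort hmt hcond.1 hcond.2]
      exact wmg_div_eq_max hnv hM mt
    calc objG lam v u (fun i => (1 / M) * w * (v i / l2 v))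
          (fun j => Real.sign (u j) * min w (abs (u j)))
        = objRadial lam M (l2 v) (fun j => |u j|) (w / M) := objG_candidate lam M v u hM hnv hw
      _ ≤ objRadial lam M (l2 v) (fun j => |u j|) (l2 b) :=
          objRadial_le_of_eq_max lam M (l2 v) _ hfix (l2_nonneg b)
      _ ≤ objG lam v u b W := objRadial_le_objG lam M v u hW

/-- Correctness of Group-Hier-Prox: if `m̃` is the smallest `m ∈ {0,…,K}` with
`|u_(m+1)| ≤ w_m ≤ |u_(m)|` (conventions `|u_(0)| = +∞`, i.e. the upper condition is vacuous
at `m = 0`, and `|u_(K+1)| = 0`), then `b̃ = (1/M)·w_{m̃}·v/‖v‖₂` together with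
`W̃_j = sign(u_j)·min{w_{m̃}, |u_j|}` is a global minimizer of
`½‖v − b‖₂² + ½‖u − W‖₂² + λ‖b‖₂` subject to `‖W‖_∞ ≤ M‖b‖₂`. -/
theorem stmt3 (k K : ℕ) (hk : 1 ≤ k) (hK : 1 ≤ K)
    (lam M : ℝ) (hlam : 0 ≤ lam) (hM : 0 < M)
    (v : Fin k → ℝ) (hv : v ≠ 0) (u : Fin K → ℝ)
    (σ : Equiv.Perm (Fin K))
    (hsort : ∀ i j : Fin K, i ≤ j → |u (σ j)| ≤ |u (σ i)|)
    (mt : ℕ) (hmt : mt ≤ K)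
    (hcond : du u σ (mt + 1) ≤ wmg u σ lam M v mt ∧
      (0 < mt → wmg u σ lam M v mt ≤ du u σ mt))
    (hsmallest : ∀ m, m ≤ K →
      (du u σ (m + 1) ≤ wmg u σ lam M v m ∧ (0 < m → wmg u σ lam M v m ≤ du u σ m)) →
      mt ≤ m) :
    (∀ j, |Real.sign (u j) * min (wmg u σ lam M v mt) (abs (u j))|
        ≤ M * l2 (fun i => (1 / M) * wmg u σ lam M v mt * (v i / l2 v))) ∧
    ∀ (b : Fin k → ℝ) (W : Fin K → ℝ), (∀ j, |W j| ≤ M * l2 b) →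
      objG lam v u (fun i => (1 / M) * wmg u σ lam M v mt * (v i / l2 v))
          (fun j => Real.sign (u j) * min (wmg u σ lam M v mt) (abs (u j)))
        ≤ objG lam v u b W :=
  stmt3_general k K lam M hM v hv u σ hsort mt hmt hcond
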